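/- arXiv:1203.4645 — 5 statements merged into one kernel-verified Lean document; each statement's English description precedes it below -/
import Mathlib

section
/- The shifted Catalan number C_n is odd if and only if n is a power of 2 (n = 2^i for some i ≥ 0). -/
lemma zmod2_sq (x : ZMod 2) : x * x = x := by fin_cases x <;> rfl

theorem catalan_parity (C : ℕ → ℕ)
    (hC0 : C 0 = 0) (hC1 : C 1 = 1)
    (hC : ∀ n, 2 ≤ n → C n = ∑ i ∈ Finset.Ico 1 n, C i * C (n - i)) :
    ∀ n, Odd (C n) ↔ ∃ i : ℕ, n = 2 ^ i := by
  have key_odd : ∀ n, 2 ≤ n → n % 2 = 1 → (C n : ZMod 2) = 0 := by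
    intro n hn hodd
    rw [hC n hn]
    push_cast
    apply Finset.sum_involution (g := fun i _ => n - i)
    · intro i hi
      simp only [Finset.mem_Ico] at hi
      have h1 : n - (n - i) = i := by omega
      rw [h1, mul_comm]
      exact CharTwo.add_self_eq_zero _
    · intro i hi hne
      simp only [Finset.mem_Ico] at hi
      intro h
      omega
    · intro i hi
      simp only [Finset.mem_Ico] at hi ⊢
      omega
    · intro i hi
      simp only [Finset.mem_Ico] at hi
      omega
  have key_even : ∀ m, 1 ≤ m → (C (2 * m) : ZMod 2) = (C m : ZMod 2) := by
    intro m hm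
    rw [hC (2 * m) (by omega)]
    push_cast
    have hmem : m ∈ Finset.Ico 1 (2 * m) := by simp only [Finset.mem_Ico]; omega
    rw [← Finset.add_sum_erase _ _ hmem]
    have h2 : 2 * m - m = m := by omega
    rw [h2, zmod2_sq]
    have : ∑ i ∈ (Finset.Ico 1 (2*m)).erase m, (C i : ZMod 2) * (C (2*m - i) : ZMod 2) = 0 := by
      apply Finset.sum_involution (g := fun i _ => 2 * m - i)
      · intro i hi
        simp only [Finset.mem_erase, Finset.mem_Ico] at hi
        have h1 : 2 * m - (2 * m - i) = i := by omega
        rw [h1, mul_comm]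
        exact CharTwo.add_self_eq_zero _
      · intro i hi hne
        simp only [Finset.mem_erase, Finset.mem_Ico] at hi
        intro h; omega
      · intro i hi
        simp only [Finset.mem_erase, Finset.mem_Ico] at hi ⊢
        omega
      · intro i hi
        simp only [Finset.mem_erase, Finset.mem_Ico] at hi
        omega
    rw [this, add_zero]
  -- bridge: Odd (C n) ↔ (C n : ZMod 2) = 1
  have bridge : ∀ k : ℕ, Odd k ↔ (k : ZMod 2) = 1 := by
    intro k
    rw [Nat.odd_iff, ← ZMod.natCast_mod k 2]
    have h : k % 2 = 0 ∨ k % 2 = 1 := by omega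
    rcases h with h | h <;> rw [h] <;> norm_num
  intro n
  induction n using Nat.strong_induction_on with
  | _ n ih =>
    match n, ih with
    | 0, _ =>
      simp only [hC0, Nat.odd_iff]
      constructor
      · intro h; omega
      · rintro ⟨i, hi⟩; exact absurd hi.symm (Nat.two_pow_pos i).ne'
    | 1, _ => simp [hC1]; exact ⟨0, rfl⟩
    | (n+2), ih =>
      rcases Nat.even_or_odd (n+2) with he | ho
      · obtain ⟨m, hm⟩ := he
        have hm1 : 1 ≤ m := by omega
        have heq : n + 2 = 2 * m := by omega
        rw [heq, bridge, key_even m hm1, ← bridge]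
        rw [ih m (by omega)]
        constructor
        · rintro ⟨i, rfl⟩; exact ⟨i + 1, by ring⟩
        · rintro ⟨i, hi⟩
          match i with
          | 0 => omega
          | j + 1 => exact ⟨j, by rw [pow_succ] at hi; omega⟩
      · have h0 : (C (n+2) : ZMod 2) = 0 := key_odd _ (by omega) (Nat.odd_iff.mp ho)
        rw [bridge, h0]
        constructor
        · intro h; exact absurd h (by decide)
        · rintro ⟨i, hi⟩
          match i with
          | 0 => omega
          | j + 1 =>
            rw [Nat.odd_iff] at ho
            rw [pow_succ] at hi
            omega
end

section
/- The sequence y (with y_0 = 0, y_1 = 1, y_n = ∑_{i=1}^{n-1} (2^i C_i − y_i)(2^{n−i} C_{n−i} − y_{n−i})) has the same parity as the shifted Catalan sequence C: for all n ≥ 1, y_n ≡ C_n (mod 2). In particular, y_n is odd if and only if n is a power of 2. -/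
lemma zmod2_conv_sum (n : ℕ) (hn : 2 ≤ n) (g : ℕ → ZMod 2) :
    ∑ i ∈ Finset.Ico 1 n, g i * g (n - i) =
      if n % 2 = 0 then g (n / 2) else 0 := by
  have hsq : ∀ x : ZMod 2, x * x = x := by decide
  have hadd : ∀ x : ZMod 2, x + x = 0 := by decide
  by_cases hpar : n % 2 = 0
  · simp only [hpar, if_true]
    set m := n / 2 with hm
    have hnm : n = 2 * m := by omega
    have hmem : m ∈ Finset.Ico 1 n := by
      simp only [Finset.mem_Ico]; omega
    rw [← Finset.add_sum_erase _ _ hmem]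
    have hz : ∑ i ∈ (Finset.Ico 1 n).erase m, g i * g (n - i) = 0 := by
      apply Finset.sum_involution (fun i _ => n - i)
      · intro a ha
        have ha' : a ∈ Finset.Ico 1 n := Finset.mem_of_mem_erase ha
        simp only [Finset.mem_Ico] at ha'
        have : n - (n - a) = a := by omega
        rw [this, mul_comm (g (n-a))]
        exact hadd _
      · intro a ha _
        have haa := ha
        simp only [Finset.mem_erase, Finset.mem_Ico] at haa
        intro h; omega
      · intro a ha
        have haa := ha
        simp only [Finset.mem_erase, Finset.mem_Ico] at haa ⊢
        omega
      · intro a ha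
        have haa := ha
        simp only [Finset.mem_erase, Finset.mem_Ico] at haa
        omega
    rw [hz, add_zero]
    have : n - m = m := by omega
    rw [this, hsq]
  · simp only [hpar, if_false]
    apply Finset.sum_involution (fun i _ => n - i)
    · intro a ha
      simp only [Finset.mem_Ico] at ha
      have : n - (n - a) = a := by omega
      rw [this, mul_comm (g (n-a))]
      exact hadd _
    · intro a ha _
      simp only [Finset.mem_Ico] at ha
      intro h; omega
    · intro a ha
      simp only [Finset.mem_Ico] at ha ⊢
      omega
    · intro a ha
      simp only [Finset.mem_Ico] at ha
      omega

theorem y_parity_eq_catalan (C y : ℕ → ℤ)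
    (hC0 : C 0 = 0) (hC1 : C 1 = 1)
    (hC : ∀ n, 2 ≤ n → C n = ∑ i ∈ Finset.Ico 1 n, C i * C (n - i))
    (hy0 : y 0 = 0) (hy1 : y 1 = 1)
    (hy : ∀ n, 2 ≤ n → y n = ∑ i ∈ Finset.Ico 1 n,
      (2 ^ i * C i - y i) * (2 ^ (n - i) * C (n - i) - y (n - i))) :
    (∀ n, 1 ≤ n → y n % 2 = C n % 2) ∧
    (∀ n, 1 ≤ n → (Odd (y n) ↔ ∃ i : ℕ, n = 2 ^ i)) := by
  -- work in ZMod 2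
  set c : ℕ → ZMod 2 := fun n => ((C n : ℤ) : ZMod 2) with hc
  have hcrec : ∀ n, 2 ≤ n → c n = ∑ i ∈ Finset.Ico 1 n, c i * c (n - i) := by
    intro n hn
    simp only [hc]
    rw [hC n hn]
    push_cast
    rfl
  -- y agrees with C mod 2
  have hyc : ∀ n, 1 ≤ n → ((y n : ZMod 2)) = c n := by
    intro n
    induction n using Nat.strong_induction_on with
    | _ n ih =>
      intro hn1
      rcases eq_or_lt_of_le hn1 with h1 | h2
      · simp [← h1, hy1, hc, hC1]
      · have hn2 : 2 ≤ n := h2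
        rw [hy n hn2, hcrec n hn2]
        push_cast
        apply Finset.sum_congr rfl
        intro i hi
        simp only [Finset.mem_Ico] at hi
        have h1 : ((y i : ZMod 2)) = c i := ih i (by omega) (by omega)
        have h2 : ((y (n - i) : ZMod 2)) = c (n - i) := ih (n - i) (by omega) (by omega)
        have h2z : (2 : ZMod 2) = 0 := by decide
        rw [h2z, zero_pow (by omega : i ≠ 0), zero_pow (by omega : n - i ≠ 0),
          zero_mul, zero_mul, zero_sub, zero_sub, neg_mul_neg, h1, h2]
  -- parity of C: c n = 1 iff n power of 2
  have hcat : ∀ n, 1 ≤ n → (c n = 1 ↔ ∃ i : ℕ, n = 2 ^ i) := by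
    intro n
    induction n using Nat.strong_induction_on with
    | _ n ih =>
      intro hn1
      rcases eq_or_lt_of_le hn1 with h1 | h2
      · simp only [← h1]
        constructor
        · intro _; exact ⟨0, rfl⟩
        · intro _; simp [hc, hC1]
      · have hn2 : 2 ≤ n := h2
        rw [hcrec n hn2, zmod2_conv_sum n hn2]
        by_cases hpar : n % 2 = 0
        · simp only [hpar, if_true]
          have hm1 : 1 ≤ n / 2 := by omega
          have hmlt : n / 2 < n := by omega
          rw [ih (n / 2) hmlt hm1]
          constructor
          · rintro ⟨i, hi⟩
            exact ⟨i + 1, by rw [pow_succ]; omega⟩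
          · rintro ⟨j, hj⟩
            rcases j with _ | k
            · simp at hj; omega
            · exact ⟨k, by rw [pow_succ] at hj; omega⟩
        · simp only [hpar, if_false]
          constructor
          · intro h; exact absurd h.symm one_ne_zero
          · rintro ⟨j, hj⟩
            rcases j with _ | k
            · simp at hj; omega
            · have : 2 ∣ n := ⟨2 ^ k, by rw [hj, pow_succ]; ring⟩
              omega
  constructor
  · intro n hn
    have := hyc n hn
    have h' : (y n : ZMod 2) = ((C n : ℤ) : ZMod 2) := this
    rwa [ZMod.intCast_eq_intCast_iff', Nat.cast_ofNat] at h'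
  · intro n hn
    rw [Int.odd_iff]
    have h' : (y n : ZMod 2) = ((C n : ℤ) : ZMod 2) := hyc n hn
    have hmod : y n % 2 = C n % 2 := by
      rwa [ZMod.intCast_eq_intCast_iff', Nat.cast_ofNat] at h'
    rw [hmod, ← hcat n hn]
    have h1 : (1 : ZMod 2) = ((1 : ℤ) : ZMod 2) := by decide
    rw [hc, h1, ZMod.intCast_eq_intCast_iff', Nat.cast_ofNat]
    norm_num
end

section
/- For n ≥ 2, y_n is even if n is not a power of 2, and y_n is odd if n is a power of 2, where y is defined by y_0 = 0, y_1 = 1, y_n = ∑_{i=1}^{n-1} (2^i C_i − y_i)(2^{n−i} C_{n−i} − y_{n−i}). -/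
theorem y_parity (C y : ℕ → ℤ)
    (hC0 : C 0 = 0) (hC1 : C 1 = 1)
    (hC : ∀ n, 2 ≤ n → C n = ∑ i ∈ Finset.Ico 1 n, C i * C (n - i))
    (hy0 : y 0 = 0) (hy1 : y 1 = 1)
    (hy : ∀ n, 2 ≤ n → y n = ∑ i ∈ Finset.Ico 1 n,
      (2 ^ i * C i - y i) * (2 ^ (n - i) * C (n - i) - y (n - i))) :
    ∀ n, 2 ≤ n →
      ((¬ ∃ i : ℕ, n = 2 ^ i) → Even (y n)) ∧
      ((∃ i : ℕ, n = 2 ^ i) → Odd (y n)) := by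
  set g : ℕ → ZMod 2 := fun n => ((y n : ℤ) : ZMod 2) with hg
  have hgrec : ∀ n, 2 ≤ n → g n = ∑ i ∈ Finset.Ico 1 n, g i * g (n - i) := by
    intro n hn
    show ((y n : ℤ) : ZMod 2) = _
    rw [hy n hn]
    push_cast
    apply Finset.sum_congr rfl
    intro i hi
    simp only [Finset.mem_Ico] at hi
    have h1 : (2 : ZMod 2) ^ i = 0 := by
      have : (2 : ZMod 2) = 0 := by decide
      rw [this]; exact zero_pow (by omega)
    have h2 : (2 : ZMod 2) ^ (n - i) = 0 := by
      have : (2 : ZMod 2) = 0 := by decide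
      rw [this]; exact zero_pow (by omega)
    rw [h1, h2]
    ring
  have hsum : ∀ n, 2 ≤ n → g n = if n % 2 = 0 then g (n / 2) else 0 := by
    intro n hn
    rw [hgrec n hn]
    rw [← Finset.sum_filter_add_sum_filter_not (Finset.Ico 1 n) (fun i => 2 * i = n)]
    have h2 : ∑ i ∈ (Finset.Ico 1 n).filter (fun i => ¬ 2 * i = n), g i * g (n - i) = 0 := by
      apply Finset.sum_involution (fun i _ => n - i)
      · intro i hi
        simp only [Finset.mem_filter, Finset.mem_Ico] at hi
        have hii : n - (n - i) = i := by omega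
        rw [hii, mul_comm]
        exact CharTwo.add_self_eq_zero _
      · intro i hi _
        simp only [Finset.mem_filter, Finset.mem_Ico] at hi
        omega
      · intro i hi
        simp only [Finset.mem_filter, Finset.mem_Ico] at hi ⊢
        omega
      · intro i hi
        simp only [Finset.mem_filter, Finset.mem_Ico] at hi
        omega
    rw [h2, add_zero]
    by_cases hpar : n % 2 = 0
    · rw [if_pos hpar]
      have hfil : (Finset.Ico 1 n).filter (fun i => 2 * i = n) = {n / 2} := by
        ext i
        simp only [Finset.mem_filter, Finset.mem_Ico, Finset.mem_singleton]
        omega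
      rw [hfil, Finset.sum_singleton]
      have hh : n - n / 2 = n / 2 := by omega
      rw [hh]
      generalize g (n / 2) = x
      revert x; decide
    · rw [if_neg hpar]
      have hfil : (Finset.Ico 1 n).filter (fun i => 2 * i = n) = ∅ := by
        ext i
        simp only [Finset.mem_filter, Finset.mem_Ico, Finset.notMem_empty, iff_false]
        omega
      rw [hfil, Finset.sum_empty]
  have key : ∀ n, 1 ≤ n → (g n = 1 ↔ ∃ i : ℕ, n = 2 ^ i) := by
    intro n
    induction n using Nat.strong_induction_on with
    | _ n ih =>
      intro hn
      rcases eq_or_lt_of_le hn with h1 | h2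
      · rw [← h1]
        constructor
        · intro _; exact ⟨0, rfl⟩
        · intro _
          show ((y 1 : ℤ) : ZMod 2) = 1
          rw [hy1]; decide
      · -- n ≥ 2
        have hs := hsum n h2
        by_cases hpar : n % 2 = 0
        · rw [if_pos hpar] at hs
          rw [hs, ih (n / 2) (by omega) (by omega)]
          constructor
          · rintro ⟨i, hi⟩
            refine ⟨i + 1, ?_⟩
            have : 2 ^ (i + 1) = 2 * 2 ^ i := by ring
            omega
          · rintro ⟨i, hi⟩
            rcases i with _ | j
            · omega
            · refine ⟨j, ?_⟩
              have : 2 ^ (j + 1) = 2 * 2 ^ j := by ring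
              omega
        · rw [if_neg hpar] at hs
          rw [hs]
          constructor
          · intro h; exact absurd h (by decide)
          · rintro ⟨i, hi⟩
            rcases i with _ | j
            · omega
            · exfalso
              have : 2 ^ (j + 1) = 2 * 2 ^ j := by ring
              omega
  intro n hn
  have hch := key n (by omega)
  have hcases : g n = 0 ∨ g n = 1 := by
    generalize g n = x; revert x; decide
  constructor
  · intro hnp
    have h0 : g n = 0 := by
      rcases hcases with h | h
      · exact h
      · exact absurd (hch.mp h) hnp
    have hdvd : (2 : ℤ) ∣ y n := by
      have := (ZMod.intCast_zmod_eq_zero_iff_dvd (y n) 2).mp h0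
      exact_mod_cast this
    obtain ⟨k, hk⟩ := hdvd
    exact ⟨k, by omega⟩
  · intro hp
    have h1 : g n = 1 := hch.mpr hp
    have hndvd : ¬ (2 : ℤ) ∣ y n := by
      intro hdvd
      have : g n = 0 := (ZMod.intCast_zmod_eq_zero_iff_dvd (y n) 2).mpr (by exact_mod_cast hdvd)
      rw [this] at h1
      exact absurd h1 (by decide)
    rw [Int.odd_iff]
    omega
end

section
/- The formal power series Y(x) = ∑_{n≥1} y_n x^n satisfies the quadratic equation 2Y(x)^2 + 2Y(x)(S(x) − 2) + (1 − S(x) − 2x) = 0, where S(x) is the formal power series with S(x)^2 = 1 − 8x and S(0) = 1. -/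
open PowerSeries

lemma sq_coeff (f : ℕ → ℚ) (n : ℕ) :
    (coeff n) (mk f ^ 2) = ∑ i ∈ Finset.range (n + 1), f i * f (n - i) := by
  rw [sq, coeff_mul, Finset.Nat.sum_antidiagonal_eq_sum_range_succ_mk]
  simp

lemma sq_coeff_Ico (f : ℕ → ℚ) (hf0 : f 0 = 0) (n : ℕ) (hn : 2 ≤ n) :
    (coeff n) (mk f ^ 2) = ∑ i ∈ Finset.Ico 1 n, f i * f (n - i) := by
  rw [sq_coeff]
  refine (Finset.sum_subset ?_ ?_).symm
  · intro i hi; simp only [Finset.mem_Ico, Finset.mem_range] at *; omega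
  · intro i hi hni
    simp only [Finset.mem_Ico, Finset.mem_range, not_and, not_lt] at hi hni
    rcases Nat.eq_zero_or_pos i with h0 | h1
    · simp [h0, hf0]
    · have : i = n := by omega
      simp [this, hf0]

theorem Y_quadratic (C y : ℕ → ℚ)
    (hC0 : C 0 = 0) (hC1 : C 1 = 1)
    (hC : ∀ n, 2 ≤ n → C n = ∑ i ∈ Finset.Ico 1 n, C i * C (n - i))
    (hy0 : y 0 = 0) (hy1 : y 1 = 1)
    (hy : ∀ n, 2 ≤ n → y n = ∑ i ∈ Finset.Ico 1 n,
      (2 ^ i * C i - y i) * (2 ^ (n - i) * C (n - i) - y (n - i))) :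
    ∀ S : PowerSeries ℚ, S ^ 2 = 1 - 8 * PowerSeries.X →
      PowerSeries.constantCoeff S = 1 →
      2 * (PowerSeries.mk y) ^ 2 + 2 * PowerSeries.mk y * (S - 2)
        + (1 - S - 2 * PowerSeries.X) = 0 := by
  intro S hS2 hS0
  have h2 : (2 : PowerSeries ℚ) = PowerSeries.C 2 := by
    rw [map_ofNat]
  set g : ℕ → ℚ := fun n => 2 ^ n * C n with hg
  set G : PowerSeries ℚ := mk g with hGdef
  -- G^2 = G - 2X
  have hG : G ^ 2 = G - 2 * X := by
    ext n
    rw [sq_coeff]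
    match n, (by omega : n = 0 ∨ n = 1 ∨ 2 ≤ n) with
    | 0, _ => simp [hg, hC0, hGdef, constantCoeff_mk]
    | 1, _ => simp [hg, hC0, hC1, hGdef, coeff_mk, Finset.sum_range_succ, h2, coeff_C_mul]
    | n, Or.inr (Or.inr hn) =>
      have h1 : (coeff n) (G - 2 * X) = g n := by
        have : n ≠ 1 := by omega
        simp [coeff_X, this, hGdef, h2, coeff_C_mul]
      rw [h1]
      rw [show (∑ i ∈ Finset.range (n + 1), g i * g (n - i))
          = ∑ i ∈ Finset.Ico 1 n, g i * g (n - i) from by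
        refine (Finset.sum_subset ?_ ?_).symm
        · intro i hi; simp only [Finset.mem_Ico, Finset.mem_range] at *; omega
        · intro i hi hni
          simp only [Finset.mem_Ico, Finset.mem_range, not_and, not_lt] at hi hni
          rcases Nat.eq_zero_or_pos i with h0 | h1
          · simp [h0, hg, hC0]
          · have : i = n := by omega
            simp [this, hg, hC0]]
      have : ∀ i ∈ Finset.Ico 1 n, g i * g (n - i) = 2 ^ n * (C i * C (n - i)) := by
        intro i hi
        simp only [Finset.mem_Ico] at hi
        rw [hg]
        simp only
        rw [show (2:ℚ) ^ i * C i * (2 ^ (n - i) * C (n - i))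
            = 2 ^ i * 2 ^ (n - i) * (C i * C (n-i)) from by ring,
          ← pow_add, Nat.add_sub_cancel' (by omega)]
      rw [Finset.sum_congr rfl this, ← Finset.mul_sum, ← hC n hn, hg]
  -- Y = X + (G - Y)^2
  set Y : PowerSeries ℚ := mk y with hYdef
  have hGY : G - Y = mk (fun n => g n - y n) := by
    ext n; simp [hGdef, hYdef]
  have hY : Y = X + (G - Y) ^ 2 := by
    rw [hGY]
    ext n
    rw [map_add]
    match n, (by omega : n = 0 ∨ n = 1 ∨ 2 ≤ n) with
    | 0, _ => rw [sq_coeff]; simp [hg, hC0, hy0, hYdef, constantCoeff_mk]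
    | 1, _ => rw [sq_coeff]; simp [hg, hC0, hy0, hy1, hYdef, coeff_mk, Finset.sum_range_succ]
    | n, Or.inr (Or.inr hn) =>
      rw [sq_coeff_Ico _ (by simp [hg, hC0, hy0]) n hn]
      have : (coeff n) (X : PowerSeries ℚ) = 0 := by
        rw [coeff_X]; simp; omega
      rw [this, zero_add, coeff_mk, hy n hn, hg]
  -- S = 1 - 2G
  have hfac : (2 * G - 1 + S) * (2 * G - 1 - S) = 0 := by
    have : (2 * G - 1) ^ 2 = S ^ 2 := by
      rw [hS2]; ring_nf; linear_combination 4 * hG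
    linear_combination this
  have hne : 2 * G - 1 - S ≠ 0 := by
    intro h
    have := congrArg (constantCoeff) h
    simp [hS0, hGdef, hg, hC0, constantCoeff_mk] at this
    norm_num at this
  have hS : S = 1 - 2 * G := by
    rcases mul_eq_zero.mp hfac with h | h
    · linear_combination h
    · exact absurd h hne
  linear_combination (2 * Y - 1) * hS - 2 * hY - 2 * hG
end

section
/- The ratio y_n / (2^n C_n) converges, as n → ∞, to (10 − 2√10)/10 = 1 − √(2/5). -/
set_option maxHeartbeats 1000000

open Filter Real Finset Topology

lemma cb_rec (m : ℕ) : ((m:ℝ)+1) * (Nat.centralBinom (m+1) : ℝ)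
    = 2*(2*(m:ℝ)+1) * (Nat.centralBinom m : ℝ) := by
  exact_mod_cast Nat.succ_mul_centralBinom_succ m

lemma cb_pos (m : ℕ) : (0:ℝ) < (Nat.centralBinom m : ℝ) := by
  exact_mod_cast Nat.centralBinom_pos m

lemma cb_upper (m : ℕ) : (Nat.centralBinom m : ℝ) * Real.sqrt (3*m+1) ≤ 4 ^ m := by
  induction m with
  | zero => simp [Nat.centralBinom]
  | succ m ih =>
      have hrec := cb_rec m
      have hcb := (cb_pos m).le
      have hcast : ((m+1:ℕ):ℝ) = (m:ℝ)+1 := by push_cast; ring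
      rw [hcast]
      set s := Real.sqrt (3*(m:ℝ)+1) with hs
      set u := Real.sqrt (3*((m:ℝ)+1)+1) with hu
      have hs0 : 0 ≤ s := Real.sqrt_nonneg _
      have hu0 : 0 ≤ u := Real.sqrt_nonneg _
      have hs2 : s^2 = 3*(m:ℝ)+1 := Real.sq_sqrt (by positivity)
      have hu2 : u^2 = 3*((m:ℝ)+1)+1 := Real.sq_sqrt (by positivity)
      have hm0 : (0:ℝ) ≤ (m:ℝ) := Nat.cast_nonneg m
      have key : (2*(m:ℝ)+1) * u ≤ 2*((m:ℝ)+1)*s := by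
        have e1 : ((2*(m:ℝ)+1) * u)^2 = (2*(m:ℝ)+1)^2*(3*((m:ℝ)+1)+1) := by rw [mul_pow, hu2]
        have e2 : (2*((m:ℝ)+1)*s)^2 = (2*((m:ℝ)+1))^2*(3*(m:ℝ)+1) := by rw [mul_pow, hs2]
        have h1 : ((2*(m:ℝ)+1) * u)^2 ≤ (2*((m:ℝ)+1)*s)^2 := by rw [e1, e2]; nlinarith [hm0]
        exact le_of_pow_le_pow_left₀ two_ne_zero (by positivity) h1
      have hm1' : (0:ℝ) < (m:ℝ)+1 := by positivity
      have chain : ((m:ℝ)+1) * ((Nat.centralBinom (m+1) : ℝ) * u) ≤ ((m:ℝ)+1) * 4^(m+1) := by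
        calc ((m:ℝ)+1) * ((Nat.centralBinom (m+1) : ℝ) * u)
            = 2 * (Nat.centralBinom m : ℝ) * ((2*(m:ℝ)+1) * u) := by
              rw [show ((m:ℝ)+1) * ((Nat.centralBinom (m+1) : ℝ) * u)
                  = (((m:ℝ)+1) * (Nat.centralBinom (m+1) : ℝ)) * u by ring, hrec]; ring
          _ ≤ 2 * (Nat.centralBinom m : ℝ) * (2*((m:ℝ)+1)*s) := by gcongr
          _ = 4*((m:ℝ)+1) * ((Nat.centralBinom m : ℝ) * s) := by ring
          _ ≤ 4*((m:ℝ)+1) * 4^m := by gcongr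
          _ = ((m:ℝ)+1) * 4^(m+1) := by ring
      exact le_of_mul_le_mul_left chain hm1'

lemma C_eq_catalan (C : ℕ → ℤ) (hC1 : C 1 = 1)
    (hC : ∀ n, 2 ≤ n → C n = ∑ i ∈ Finset.Ico 1 n, C i * C (n - i)) :
    ∀ n, 1 ≤ n → C n = (catalan (n-1) : ℤ) := by
  intro n
  induction n using Nat.strong_induction_on with
  | _ n IH =>
    intro hn
    rcases eq_or_lt_of_le hn with h1 | h2
    · rw [← h1]; simp [hC1]
    · have h2 : 2 ≤ n := h2
      rw [hC n h2]
      have hterm : ∀ i ∈ Finset.Ico 1 n, C i * C (n - i)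
          = ((catalan (i-1) * catalan (n-i-1) : ℕ) : ℤ) := by
        intro i hi
        rw [Finset.mem_Ico] at hi
        rw [IH i hi.2 hi.1, IH (n-i) (by omega) (by omega)]
        push_cast; ring
      rw [Finset.sum_congr rfl hterm, ← Nat.cast_sum]
      congr 1
      rw [Finset.sum_Ico_eq_sum_range]
      have hcat : catalan (n - 2 + 1) = ∑ k ∈ range (n-2+1), catalan k * catalan (n-2-k) := by
        rw [catalan_succ']
        exact Finset.Nat.sum_antidiagonal_eq_sum_range_succ_mk _ _
      have e1 : ∀ i ∈ range (n - 1), catalan (1 + i - 1) * catalan (n - (1+i) - 1)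
          = catalan i * catalan (n-2-i) := by
        intro i hi
        congr 2 <;> omega
      rw [Finset.sum_congr rfl e1, show n - 1 = n - 2 + 1 by omega, hcat]

lemma main (A T : ℕ → ℝ)
    (hA0 : A 0 = 0) (hT0 : T 0 = 0) (hA1 : A 1 = 2) (hT1 : T 1 = 1)
    (hApos : ∀ n, 1 ≤ n → 0 < A n)
    (hArec : ∀ n, 2 ≤ n → A n = ∑ i ∈ Finset.Ico 1 n, A i * A (n-i))
    (hYrec : ∀ n, 2 ≤ n → A n - T n = ∑ i ∈ Finset.Ico 1 n, T i * T (n-i))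
    (hAub : ∀ n, 1 ≤ n → A n ≤ 8^n / (4 * n * Real.sqrt n))
    (hrat : Tendsto (fun n => A n / A (n+1)) atTop (𝓝 (1/8))) :
    Tendsto (fun n => (A n - T n) / A n) atTop (𝓝 ((10 - 2*Real.sqrt 10)/10)) := by
  -- nonnegativity of A
  have hAnn : ∀ n, 0 ≤ A n := by
    intro n
    cases n with
    | zero => rw [hA0]
    | succ m => exact (hApos _ (Nat.succ_le_succ (Nat.zero_le m))).le
  -- T bounds
  have hTb : ∀ n, 0 ≤ T n ∧ T n ≤ A n := by
    intro n
    induction n using Nat.strong_induction_on with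
    | _ n IH =>
      match n, IH with
      | 0, _ => exact ⟨le_of_eq hT0.symm, by rw [hT0]; exact hAnn 0⟩
      | 1, _ => exact ⟨by rw [hT1]; norm_num, by rw [hT1, hA1]; norm_num⟩
      | (m+2), IH =>
        have h2 : 2 ≤ m + 2 := by omega
        have hY := hYrec (m+2) h2
        have hWnn : 0 ≤ ∑ i ∈ Finset.Ico 1 (m+2), T i * T (m+2-i) := by
          apply Finset.sum_nonneg
          intro i hi
          rw [Finset.mem_Ico] at hi
          exact mul_nonneg (IH i (by omega) |>.1) (IH (m+2-i) (by omega) |>.1)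
        have hWle : ∑ i ∈ Finset.Ico 1 (m+2), T i * T (m+2-i) ≤ A (m+2) := by
          rw [hArec (m+2) h2]
          apply Finset.sum_le_sum
          intro i hi
          rw [Finset.mem_Ico] at hi
          have h1 := IH i (by omega)
          have h2' := IH (m+2-i) (by omega)
          exact mul_le_mul h1.2 h2'.2 h2'.1 (hAnn i)
        constructor
        · linarith [hY, hWle]
        · linarith [hY, hWnn]
  have hTnn : ∀ n, 0 ≤ T n := fun n => (hTb n).1
  have hTle : ∀ n, T n ≤ A n := fun n => (hTb n).2
  -- scaled sequences
  set g : ℕ → ℝ := fun n => A n / 8^n with hg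
  set h : ℕ → ℝ := fun n => T n / 8^n with hh
  have hg0 : g 0 = 0 := by simp [hg, hA0]
  have hh0 : h 0 = 0 := by simp [hh, hT0]
  have hg1 : g 1 = 1/4 := by simp [hg, hA1]; norm_num
  have hgh1 : g 1 - h 1 = 1/8 := by simp [hg, hh, hA1, hT1]; norm_num
  have hgnn : ∀ n, 0 ≤ g n := fun n => div_nonneg (hAnn n) (by positivity)
  have hhnn : ∀ n, 0 ≤ h n := fun n => div_nonneg (hTnn n) (by positivity)
  have hhg : ∀ n, h n ≤ g n := fun n => (div_le_div_iff_of_pos_right (by positivity)).mpr (hTle n)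
  -- summability
  have hgub : ∀ n, g n ≤ (1/4) * (1 / ((n:ℝ) * Real.sqrt n)) := by
    intro n
    cases n with
    | zero => simp [hg0]
    | succ m =>
      have h1 : (1:ℕ) ≤ m+1 := by omega
      have := hAub (m+1) h1
      have h8 : (0:ℝ) < 8^(m+1) := by positivity
      rw [hg]
      have hx : (0:ℝ) < (((m+1):ℕ):ℝ) * Real.sqrt ((m+1):ℕ) := by
        have : (0:ℝ) < (((m+1):ℕ):ℝ) := by exact_mod_cast Nat.succ_pos m
        positivity
      rw [div_le_iff₀ h8]
      calc A (m+1) ≤ 8^(m+1) / (4 * (((m+1):ℕ):ℝ) * Real.sqrt ((m+1):ℕ)) := this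
        _ = 1/4 * (1/((((m+1):ℕ):ℝ) * Real.sqrt ((m+1):ℕ))) * 8^(m+1) := by
            field_simp
  have hScomp : Summable (fun n : ℕ => (1/4:ℝ) * (1 / ((n:ℝ) * Real.sqrt n))) := by
    apply Summable.mul_left
    have hbase : Summable (fun n : ℕ => 1 / (n:ℝ) ^ ((3:ℝ)/2)) :=
      Real.summable_one_div_nat_rpow.mpr (by norm_num)
    apply hbase.congr
    intro n
    cases n with
    | zero => simp
    | succ m =>
      have hm : (0:ℝ) < ((m+1:ℕ):ℝ) := by exact_mod_cast Nat.succ_pos m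
      have key : ((m+1:ℕ):ℝ) ^ ((3:ℝ)/2) = ((m+1:ℕ):ℝ) * Real.sqrt ((m+1:ℕ):ℝ) := by
        rw [show (3:ℝ)/2 = 1 + 1/2 by norm_num, Real.rpow_add hm, Real.rpow_one,
          ← Real.sqrt_eq_rpow]
      rw [key]
  have Sg : Summable g := by
    apply Summable.of_nonneg_of_le hgnn hgub hScomp
  have Sh : Summable h := Summable.of_nonneg_of_le hhnn hhg Sg
  set σ : ℝ := ∑' n, g n with hσ
  set τ : ℝ := ∑' n, h n with hτ
  have hτ0 : 0 ≤ τ := tsum_nonneg hhnn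
  have hτσ : τ ≤ σ := Summable.tsum_le_tsum hhg Sh Sg
  -- Cauchy product identities
  have hpow : ∀ n, ∀ k ∈ Finset.range (n+1), (8:ℝ)^k * 8^(n-k) = 8^n := by
    intro n k hk
    rw [Finset.mem_range] at hk
    rw [← pow_add]
    congr 1
    omega
  have hconv_g : ∀ n, 2 ≤ n → ∑ k ∈ Finset.range (n+1), g k * g (n-k) = g n := by
    intro n h2
    have hterm : ∀ k ∈ Finset.range (n+1), g k * g (n-k) = A k * A (n-k) / 8^n := by
      intro k hk
      rw [hg]
      rw [div_mul_div_comm, hpow n k hk]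
    rw [Finset.sum_congr rfl hterm, ← Finset.sum_div]
    show _ = A n / 8^n
    congr 1
    rw [hArec n h2]
    symm
    apply Finset.sum_subset
    · intro x hx
      rw [Finset.mem_Ico] at hx
      rw [Finset.mem_range]
      omega
    · intro x hx hnx
      rw [Finset.mem_range] at hx
      rw [Finset.mem_Ico] at hnx
      have : x = 0 ∨ x = n := by omega
      rcases this with h0 | hn
      · rw [h0, hA0]; ring
      · rw [hn, Nat.sub_self, hA0]; ring
  have hconv_h : ∀ n, 2 ≤ n → ∑ k ∈ Finset.range (n+1), h k * h (n-k) = g n - h n := by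
    intro n h2
    have hterm : ∀ k ∈ Finset.range (n+1), h k * h (n-k) = T k * T (n-k) / 8^n := by
      intro k hk
      rw [hh]
      rw [div_mul_div_comm, hpow n k hk]
    rw [Finset.sum_congr rfl hterm, ← Finset.sum_div]
    show _ = A n / 8^n - T n / 8^n
    rw [div_sub_div_same]
    congr 1
    rw [hYrec n h2]
    symm
    apply Finset.sum_subset
    · intro x hx
      rw [Finset.mem_Ico] at hx
      rw [Finset.mem_range]
      omega
    · intro x hx hnx
      rw [Finset.mem_range] at hx
      rw [Finset.mem_Ico] at hnx
      have : x = 0 ∨ x = n := by omega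
      rcases this with h0 | hn
      · rw [h0, hT0]; ring
      · rw [hn, Nat.sub_self, hT0]; ring
  -- Cauchy products
  have hnormg : Summable (fun n => ‖g n‖) := by
    apply Sg.congr
    intro n
    rw [Real.norm_eq_abs, abs_of_nonneg (hgnn n)]
  have hnormh : Summable (fun n => ‖h n‖) := by
    apply Sh.congr
    intro n
    rw [Real.norm_eq_abs, abs_of_nonneg (hhnn n)]
  have hcpg : σ * σ = ∑' n, ∑ kl ∈ Finset.HasAntidiagonal.antidiagonal n, g kl.1 * g kl.2 :=
    tsum_mul_tsum_eq_tsum_sum_antidiagonal_of_summable_norm hnormg hnormg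
  have hcph : τ * τ = ∑' n, ∑ kl ∈ Finset.HasAntidiagonal.antidiagonal n, h kl.1 * h kl.2 :=
    tsum_mul_tsum_eq_tsum_sum_antidiagonal_of_summable_norm hnormh hnormh
  have hanti : ∀ (f : ℕ → ℝ), ∀ n : ℕ, ∑ kl ∈ Finset.HasAntidiagonal.antidiagonal n, f kl.1 * f kl.2
      = ∑ k ∈ Finset.range (n+1), f k * f (n-k) := by
    intro f n
    exact Finset.Nat.sum_antidiagonal_eq_sum_range_succ_mk _ n
  have hgfun : (fun n => ∑ kl ∈ Finset.HasAntidiagonal.antidiagonal n, g kl.1 * g kl.2)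
      = fun n => g n - (if n = 1 then (1/4:ℝ) else 0) := by
    funext n
    rw [hanti g n]
    match n with
    | 0 => simp [hg0]
    | 1 => simp [Finset.sum_range_succ, hg0, hg1]
    | (m+2) =>
      rw [hconv_g (m+2) (by omega)]
      simp
  have hhfun : (fun n => ∑ kl ∈ Finset.HasAntidiagonal.antidiagonal n, h kl.1 * h kl.2)
      = fun n => (g n - h n) - (if n = 1 then (1/8:ℝ) else 0) := by
    funext n
    rw [hanti h n]
    match n with
    | 0 => simp [hg0, hh0]
    | 1 => simp [Finset.sum_range_succ, hh0]; linarith [hgh1]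
    | (m+2) =>
      rw [hconv_h (m+2) (by omega)]
      simp
  have hite4 : Summable (fun n : ℕ => if n = 1 then (1/4:ℝ) else 0) := by
    apply summable_of_ne_finset_zero (s := {1})
    intro n hn
    simp at hn
    simp [hn]
  have hite8 : Summable (fun n : ℕ => if n = 1 then (1/8:ℝ) else 0) := by
    apply summable_of_ne_finset_zero (s := {1})
    intro n hn
    simp at hn
    simp [hn]
  have hσeq : σ * σ = σ - 1/4 := by
    rw [hcpg, hgfun, Summable.tsum_sub Sg hite4, tsum_ite_eq 1 (fun _ => (1/4:ℝ))]
  have hτeq : τ * τ = (σ - τ) - 1/8 := by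
    rw [hcph, hhfun, Summable.tsum_sub (Sg.sub Sh) hite8, Summable.tsum_sub Sg Sh, tsum_ite_eq 1 (fun _ => (1/8:ℝ))]
  have hσval : σ = 1/2 := by nlinarith [sq_nonneg (σ - 1/2)]
  have hτmax : τ ≤ 1/2 := hτσ.trans_eq hσval
  -- value of τ
  set s10 : ℝ := Real.sqrt 10 with hs10
  have hs2 : s10^2 = 10 := Real.sq_sqrt (by norm_num)
  have hs0 : 0 ≤ s10 := Real.sqrt_nonneg _
  have hτval : τ = (s10 - 2)/4 := by
    have hfac : (τ - (s10-2)/4) * (τ + (s10+2)/4) = 0 := by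
      have hq : τ*τ + τ - 3/8 = 0 := by rw [hσval] at hτeq; linarith
      linear_combination hq - (1/16) * hs2
    rcases mul_eq_zero.mp hfac with h1 | h2
    · linarith [sub_eq_zero.mp h1]
    · nlinarith [h2]
  have h2τ : 2*τ < 1 := by
    have : s10 < 4 := by
      rw [hs10]
      exact (Real.sqrt_lt' (by norm_num)).mpr (by norm_num)
    rw [hτval]; linarith
  -- ratio limits
  have hAne : ∀ n, 1 ≤ n → A n ≠ 0 := fun n hn => (hApos n hn).ne'
  have hq : Tendsto (fun m : ℕ => A (m-1) / A m) atTop (𝓝 (1/8)) := by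
    have hcomp : Tendsto (fun m : ℕ => A (m-1) / A ((m-1)+1)) atTop (𝓝 (1/8)) :=
      hrat.comp (tendsto_sub_atTop_nat 1)
    apply hcomp.congr'
    filter_upwards [eventually_ge_atTop 1] with m hm
    rw [show m - 1 + 1 = m from by omega]
  have hratk : ∀ i : ℕ, Tendsto (fun n => A (n-i) / A n) atTop (𝓝 ((1/8:ℝ)^i)) := by
    intro i
    induction i with
    | zero =>
      simp only [Nat.sub_zero, pow_zero]
      apply Tendsto.congr' _ tendsto_const_nhds
      filter_upwards [eventually_ge_atTop 1] with n hn
      exact (div_self (hAne n hn)).symm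
    | succ i IH =>
      have h1 : Tendsto (fun n : ℕ => (A ((n-i)-1)/A (n-i)) * (A (n-i)/A n)) atTop
          (𝓝 ((1/8) * (1/8:ℝ)^i)) :=
        Tendsto.mul (hq.comp (tendsto_sub_atTop_nat i)) IH
      rw [show ((1/8:ℝ))^(i+1) = (1/8) * (1/8:ℝ)^i by ring]
      apply Tendsto.congr' _ h1
      filter_upwards [eventually_ge_atTop (i+2)] with n hn
      have hsub : n - (i+1) = (n-i) - 1 := by omega
      have hne : A (n-i) ≠ 0 := hAne _ (by omega)
      show (A ((n-i)-1)/A (n-i)) * (A (n-i)/A n) = A (n - (i+1)) / A n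
      rw [hsub, div_mul_div_comm, mul_comm (A ((n-i)-1)) (A (n-i)), mul_div_mul_left _ _ hne]
  -- the ratio sequence
  set r : ℕ → ℝ := fun n => T n / A n with hr
  have hrnn : ∀ n, 0 ≤ r n := fun n => div_nonneg (hTnn n) (hAnn n)
  have hrle1 : ∀ n, r n ≤ 1 := by
    intro n
    cases n with
    | zero => show T 0 / A 0 ≤ 1; rw [hT0]; norm_num
    | succ m => exact div_le_one_of_le₀ (hTle _) (hAnn _)
  have hbddU : IsBoundedUnder (· ≤ ·) atTop r := isBoundedUnder_of ⟨1, fun n => hrle1 n⟩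
  have hbddL : IsBoundedUnder (· ≥ ·) atTop r := isBoundedUnder_of ⟨0, fun n => hrnn n⟩
  have hcobU : IsCoboundedUnder (· ≤ ·) atTop r := hbddL.isCoboundedUnder_le
  have hcobL : IsCoboundedUnder (· ≥ ·) atTop r := hbddU.isCoboundedUnder_ge
  set L : ℝ := limsup r atTop with hLdef
  set l : ℝ := liminf r atTop with hldef
  have hlL : l ≤ L := liminf_le_limsup hbddU hbddL
  have hl0 : 0 ≤ l := le_liminf_of_le hcobL (Eventually.of_forall hrnn)
  have hL1 : L ≤ 1 := limsup_le_of_le hcobU (Eventually.of_forall hrle1)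
  have hL0 : 0 ≤ L := hl0.trans hlL
  -- partial sums converge
  have hPS : Tendsto (fun M => ∑ i ∈ Finset.Ico 1 M, h i) atTop (𝓝 τ) := by
    apply Sh.hasSum.tendsto_sum_nat.congr
    intro M
    symm
    apply Finset.sum_subset
    · intro x hx; rw [Finset.mem_Ico] at hx; exact Finset.mem_range.mpr hx.2
    · intro x hx hnx
      rw [Finset.mem_range] at hx; rw [Finset.mem_Ico] at hnx
      have hx0 : x = 0 := by omega
      rw [hx0, hh0]
  have hQS : Tendsto (fun M => ∑ i ∈ Finset.Ico 1 M, g i) atTop (𝓝 (1/2)) := by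
    rw [← hσval]
    apply Sg.hasSum.tendsto_sum_nat.congr
    intro M
    symm
    apply Finset.sum_subset
    · intro x hx; rw [Finset.mem_Ico] at hx; exact Finset.mem_range.mpr hx.2
    · intro x hx hnx
      rw [Finset.mem_range] at hx; rw [Finset.mem_Ico] at hnx
      have hx0 : x = 0 := by omega
      rw [hx0, hg0]
  -- limits of the edge sums (for fixed M)
  have hhi : ∀ i : ℕ, T i * (1/8:ℝ)^i = h i := by
    intro i
    show _ = T i / 8^i
    rw [one_div, inv_pow, ← div_eq_mul_inv]
  have hgi : ∀ i : ℕ, A i * (1/8:ℝ)^i = g i := by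
    intro i
    show _ = A i / 8^i
    rw [one_div, inv_pow, ← div_eq_mul_inv]
  have hSAt : ∀ M : ℕ, Tendsto (fun n => ∑ i ∈ Finset.Ico 1 M, T i * (A (n-i) / A n)) atTop
      (𝓝 (∑ i ∈ Finset.Ico 1 M, h i)) := by
    intro M
    apply tendsto_finset_sum
    intro i _
    have := (hratk i).const_mul (T i)
    rwa [hhi i] at this
  have hFAt : ∀ M : ℕ, Tendsto (fun n => ∑ i ∈ Finset.Ico 1 M, A i * (A (n-i) / A n)) atTop
      (𝓝 (∑ i ∈ Finset.Ico 1 M, g i)) := by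
    intro M
    apply tendsto_finset_sum
    intro i _
    have := (hratk i).const_mul (A i)
    rwa [hgi i] at this
  -- the key epsilon estimate
  have key : ∀ ε : ℝ, 0 < ε → ε ≤ 1 → L ≤ 1 - 2*τ*l + 10*ε ∧ 1 - 2*τ*L - 10*ε ≤ l := by
    intro ε hε hε1
    obtain ⟨M, hM1, hMh, hMg⟩ : ∃ M : ℕ, 1 ≤ M ∧ (τ - ε < ∑ i ∈ Finset.Ico 1 M, h i)
        ∧ (1/2 - ε < ∑ i ∈ Finset.Ico 1 M, g i) := by
      have hev1 : ∀ᶠ M : ℕ in atTop, τ - ε < ∑ i ∈ Finset.Ico 1 M, h i :=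
        hPS.eventually_const_lt (show τ - ε < τ by linarith)
      have hev2 : ∀ᶠ M : ℕ in atTop, 1/2 - ε < ∑ i ∈ Finset.Ico 1 M, g i :=
        hQS.eventually_const_lt (show 1/2 - ε < 1/2 by linarith)
      rcases ((eventually_ge_atTop 1).and (hev1.and hev2)).exists with ⟨M, h1, h2, h3⟩
      exact ⟨M, h1, h2, h3⟩
    set PS := ∑ i ∈ Finset.Ico 1 M, h i with hPSdef
    set QS := ∑ i ∈ Finset.Ico 1 M, g i with hQSdef
    have hPSle : PS ≤ τ := Summable.sum_le_tsum _ (fun i _ => hhnn i) Sh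
    have hc : ∀ᶠ m : ℕ in atTop, max (l - ε) 0 ≤ r m ∧ r m < L + ε := by
      have e1 : ∀ᶠ m in atTop, l - ε < r m := eventually_lt_of_lt_liminf (by linarith) hbddL
      have e2 : ∀ᶠ m in atTop, r m < L + ε := eventually_lt_of_limsup_lt (by linarith) hbddU
      filter_upwards [e1, e2] with m h1 h2
      exact ⟨max_le h1.le (hrnn m), h2⟩
    obtain ⟨N1, hN1⟩ := eventually_atTop.mp hc
    set c := max (l - ε) 0 with hcdef
    have hc0 : 0 ≤ c := le_max_right _ _
    have hc1 : c ≤ 1 := max_le (by linarith [hlL.trans hL1]) zero_le_one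
    have hlc : l - ε ≤ c := le_max_left _ _
    have hSAu : ∀ᶠ n in atTop, (∑ i ∈ Finset.Ico 1 M, T i * (A (n-i)/A n)) < PS + ε :=
      (hSAt M).eventually_lt_const (show PS < PS + ε by linarith)
    have hSAl : ∀ᶠ n in atTop, PS - ε < ∑ i ∈ Finset.Ico 1 M, T i * (A (n-i)/A n) :=
      (hSAt M).eventually_const_lt (show PS - ε < PS by linarith)
    have hFAl : ∀ᶠ n in atTop, QS - ε < ∑ i ∈ Finset.Ico 1 M, A i * (A (n-i)/A n) :=
      (hFAt M).eventually_const_lt (show QS - ε < QS by linarith)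
    have hmain : ∀ᶠ n in atTop, (1 - 2*τ*L - 10*ε ≤ r n) ∧ (r n ≤ 1 - 2*τ*l + 10*ε) := by
      filter_upwards [hSAu, hSAl, hFAl, eventually_ge_atTop (N1 + 2*M + 2)] with n hSu hSl hFl hn
      set SA := ∑ i ∈ Finset.Ico 1 M, T i * (A (n-i)/A n) with hSAdef
      set FA := ∑ i ∈ Finset.Ico 1 M, A i * (A (n-i)/A n) with hFAdef
      have hn2 : 2 ≤ n := by omega
      have hAn : 0 < A n := hApos n (by omega)
      have hrm : ∀ i ∈ Finset.Ico 1 M, c ≤ r (n-i) ∧ r (n-i) < L + ε := by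
        intro i hi
        rw [Finset.mem_Ico] at hi
        exact hN1 (n-i) (by omega)
      have hTlo : ∀ i ∈ Finset.Ico 1 M, c * A (n-i) ≤ T (n-i) := by
        intro i hi
        have hA : 0 < A (n-i) := hApos _ (by rw [Finset.mem_Ico] at hi; omega)
        have h1 := (hrm i hi).1
        calc c * A (n-i) ≤ (T (n-i)/A (n-i)) * A (n-i) :=
              mul_le_mul_of_nonneg_right h1 hA.le
          _ = T (n-i) := div_mul_cancel₀ _ hA.ne'
      have hThi : ∀ i ∈ Finset.Ico 1 M, T (n-i) ≤ (L+ε) * A (n-i) := by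
        intro i hi
        have hA : 0 < A (n-i) := hApos _ (by rw [Finset.mem_Ico] at hi; omega)
        have h1 := (hrm i hi).2.le
        calc T (n-i) = (T (n-i)/A (n-i)) * A (n-i) := (div_mul_cancel₀ _ hA.ne').symm
          _ ≤ (L+ε) * A (n-i) := mul_le_mul_of_nonneg_right h1 hA.le
      have hAnSA : A n * SA = ∑ i ∈ Finset.Ico 1 M, T i * A (n-i) := by
        rw [hSAdef, Finset.mul_sum]
        apply Finset.sum_congr rfl
        intro i _
        rw [mul_comm (A n) _, mul_assoc, div_mul_cancel₀ _ hAn.ne']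
      have hAnFA : A n * FA = ∑ i ∈ Finset.Ico 1 M, A i * A (n-i) := by
        rw [hFAdef, Finset.mul_sum]
        apply Finset.sum_congr rfl
        intro i _
        rw [mul_comm (A n) _, mul_assoc, div_mul_cancel₀ _ hAn.ne']
      have hE_lo : c * (A n * SA) ≤ ∑ i ∈ Finset.Ico 1 M, T i * T (n-i) := by
        rw [hAnSA, Finset.mul_sum]
        apply Finset.sum_le_sum
        intro i hi
        calc c * (T i * A (n-i)) = T i * (c * A (n-i)) := by ring
          _ ≤ T i * T (n-i) := mul_le_mul_of_nonneg_left (hTlo i hi) (hTnn i)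
      have hE_hi : ∑ i ∈ Finset.Ico 1 M, T i * T (n-i) ≤ (L+ε) * (A n * SA) := by
        rw [hAnSA, Finset.mul_sum]
        apply Finset.sum_le_sum
        intro i hi
        calc T i * T (n-i) ≤ T i * ((L+ε) * A (n-i)) :=
              mul_le_mul_of_nonneg_left (hThi i hi) (hTnn i)
          _ = (L+ε) * (T i * A (n-i)) := by ring
      have hdec : ∀ f : ℕ → ℝ, ∑ i ∈ Finset.Ico 1 n, f i
          = (∑ i ∈ Finset.Ico 1 M, f i) + (∑ i ∈ Finset.Ico M (n-M+1), f i)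
            + (∑ i ∈ Finset.Ico (n-M+1) n, f i) := by
        intro f
        have e1 := Finset.sum_Ico_consecutive f (show 1 ≤ M by omega) (show M ≤ n-M+1 by omega)
        have e2 := Finset.sum_Ico_consecutive f (show 1 ≤ n-M+1 by omega)
          (show n-M+1 ≤ n by omega)
        linarith
      have hsym : ∀ f : ℕ → ℝ, ∑ i ∈ Finset.Ico (n-M+1) n, f i * f (n-i)
          = ∑ i ∈ Finset.Ico 1 M, f i * f (n-i) := by
        intro f
        apply Finset.sum_nbij' (fun a => n - a) (fun a => n - a)
        · intro a ha
          rw [Finset.mem_Ico] at ha ⊢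
          omega
        · intro a ha
          rw [Finset.mem_Ico] at ha ⊢
          omega
        · intro a ha
          rw [Finset.mem_Ico] at ha
          omega
        · intro a ha
          rw [Finset.mem_Ico] at ha
          omega
        · intro a ha
          rw [Finset.mem_Ico] at ha
          rw [show n - (n - a) = a from by omega]
          ring
      have hmidnn : (0:ℝ) ≤ ∑ i ∈ Finset.Ico M (n-M+1), T i * T (n-i) :=
        Finset.sum_nonneg fun i _ => mul_nonneg (hTnn _) (hTnn _)
      have hmidle : ∑ i ∈ Finset.Ico M (n-M+1), T i * T (n-i)
          ≤ ∑ i ∈ Finset.Ico M (n-M+1), A i * A (n-i) :=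
        Finset.sum_le_sum fun i _ => mul_le_mul (hTle _) (hTle _) (hTnn _) (hAnn _)
      have hWdec : A n - T n = (∑ i ∈ Finset.Ico 1 M, T i * T (n-i))
          + (∑ i ∈ Finset.Ico M (n-M+1), T i * T (n-i))
          + (∑ i ∈ Finset.Ico 1 M, T i * T (n-i)) := by
        rw [hYrec n hn2]
        nth_rewrite 2 [← hsym T]
        exact hdec _
      have hASdec : A n = (∑ i ∈ Finset.Ico 1 M, A i * A (n-i))
          + (∑ i ∈ Finset.Ico M (n-M+1), A i * A (n-i))
          + (∑ i ∈ Finset.Ico 1 M, A i * A (n-i)) := by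
        rw [hArec n hn2]
        nth_rewrite 2 [← hsym A]
        exact hdec _
      have hTub : T n ≤ (1 - 2*(c*(PS-ε))) * A n := by
        have u1 : c * (A n * (PS - ε)) ≤ c * (A n * SA) :=
          mul_le_mul_of_nonneg_left (mul_le_mul_of_nonneg_left hSl.le hAn.le) hc0
        linarith [hWdec, hE_lo, hmidnn, u1, (by ring : c*(A n*(PS-ε)) = (c*(PS-ε))*A n)]
      have hTlb : (2*(QS-ε) - 2*((L+ε)*(PS+ε))) * A n ≤ T n := by
        have v1 : (L+ε) * (A n * SA) ≤ (L+ε) * (A n * (PS+ε)) :=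
          mul_le_mul_of_nonneg_left (mul_le_mul_of_nonneg_left hSu.le hAn.le)
            (by linarith [hL0])
        have v2 : A n * (QS - ε) ≤ A n * FA :=
          mul_le_mul_of_nonneg_left hFl.le hAn.le
        linarith [hWdec, hASdec, hE_hi, hmidle, hAnFA, v1, v2, (by ring : (L+ε)*(A n*(PS+ε)) = ((L+ε)*(PS+ε))*A n), (by ring : (2*(QS-ε) - 2*((L+ε)*(PS+ε)))*A n = 2*(A n*(QS-ε)) - 2*(((L+ε)*(PS+ε))*A n))]
      have hrub : r n ≤ 1 - 2*(c*(PS-ε)) := by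
        show T n / A n ≤ _
        rw [div_le_iff₀ hAn]
        exact hTub
      have hrlb : 2*(QS-ε) - 2*((L+ε)*(PS+ε)) ≤ r n := by
        show _ ≤ T n / A n
        rw [le_div_iff₀ hAn]
        exact hTlb
      constructor
      · have w1 : (L+ε)*(PS+ε) ≤ (L+ε)*(τ+ε) :=
          mul_le_mul_of_nonneg_left (by linarith [hPSle]) (by linarith [hL0])
        have w2 : L*ε ≤ 1*ε := mul_le_mul_of_nonneg_right hL1 hε.le
        have w3 : ε*τ ≤ ε*(1/2) := mul_le_mul_of_nonneg_left hτmax hε.le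
        have w4 : ε*ε ≤ 1*ε := mul_le_mul_of_nonneg_right hε1 hε.le
        linarith [hrlb, hMg, w1, w2, w3, w4,
          (by ring : (L+ε)*(τ+ε) = L*τ + L*ε + ε*τ + ε*ε)]
      · have w2 : c*(τ - 2*ε) ≤ c*(PS - ε) :=
          mul_le_mul_of_nonneg_left (by linarith [hMh]) hc0
        have w3 : (l - ε)*τ ≤ c*τ := mul_le_mul_of_nonneg_right hlc hτ0
        have w4 : c*ε ≤ 1*ε := mul_le_mul_of_nonneg_right hc1 hε.le
        have w5 : ε*τ ≤ ε*(1/2) := mul_le_mul_of_nonneg_left hτmax hε.le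
        linarith [hrub, w2, w3, w4, w5,
          (by ring : c*(τ-2*ε) = c*τ - 2*(c*ε)),
          (by ring : (l-ε)*τ = l*τ - ε*τ)]
    exact ⟨limsup_le_of_le hcobU (hmain.mono fun n hn => hn.2),
           le_liminf_of_le hcobL (hmain.mono fun n hn => hn.1)⟩
  -- conclude from the key estimate
  have hL2 : L ≤ 1 - 2*τ*l := by
    by_contra hcon
    push_neg at hcon
    set δ := L - (1 - 2*τ*l) with hδ
    have hδ0 : 0 < δ := by linarith
    have hkey := (key (min (δ/20) 1) (by positivity) (min_le_right _ _)).1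
    have h1 : 10 * min (δ/20) 1 ≤ δ/2 := by
      have := min_le_left (δ/20) 1
      linarith
    linarith
  have hl2 : 1 - 2*τ*L ≤ l := by
    by_contra hcon
    push_neg at hcon
    set δ := (1 - 2*τ*L) - l with hδ
    have hδ0 : 0 < δ := by linarith
    have hkey := (key (min (δ/20) 1) (by positivity) (min_le_right _ _)).2
    have h1 : 10 * min (δ/20) 1 ≤ δ/2 := by
      have := min_le_left (δ/20) 1
      linarith
    linarith
  have hLeq : L = l := by
    refine le_antisymm ?_ hlL
    by_contra hcon
    push_neg at hcon
    nlinarith [hL2, hl2, mul_pos (show (0:ℝ) < 1 - 2*τ by linarith)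
      (show (0:ℝ) < L - l by linarith)]
  have hfix : L = 1 - 2*τ*L := by
    rw [← hLeq] at hL2 hl2
    linarith
  have hs10pos : 0 < s10 := Real.sqrt_pos.mpr (by norm_num)
  have hfix2 : L = 1 - 2*((s10-2)/4)*L := by rw [← hτval]; exact hfix
  have hLs : s10 * L = 2 := by linear_combination (2:ℝ) * hfix2
  have hrt : Tendsto r atTop (𝓝 L) := by
    apply tendsto_of_liminf_eq_limsup _ hLdef.symm hbddU hbddL
    rw [← hldef, ← hLeq]
  have htarget : Tendsto (fun n => (A n - T n)/A n) atTop (𝓝 (1 - L)) := by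
    have h1 : Tendsto (fun n => 1 - r n) atTop (𝓝 (1 - L)) := tendsto_const_nhds.sub hrt
    apply h1.congr'
    filter_upwards [eventually_ge_atTop 1] with n hn
    show 1 - T n / A n = _
    rw [sub_div, div_self (hAne n hn)]
  have hval : (10 - 2*s10)/10 = 1 - L := by
    have h10 : 10*L = 2*s10 := by
      calc 10*L = s10^2 * L := by rw [hs2]
        _ = s10 * (s10 * L) := by ring
        _ = s10 * 2 := by rw [hLs]
        _ = 2*s10 := by ring
    rw [show (2:ℝ)*s10 = 10*L from h10.symm]
    ring
  rw [hval]
  exact htarget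

theorem y_ratio_limit (C y : ℕ → ℤ)
    (hC0 : C 0 = 0) (hC1 : C 1 = 1)
    (hC : ∀ n, 2 ≤ n → C n = ∑ i ∈ Finset.Ico 1 n, C i * C (n - i))
    (hy0 : y 0 = 0) (hy1 : y 1 = 1)
    (hy : ∀ n, 2 ≤ n → y n = ∑ i ∈ Finset.Ico 1 n,
      (2 ^ i * C i - y i) * (2 ^ (n - i) * C (n - i) - y (n - i))) :
    Filter.Tendsto (fun n : ℕ => (y n : ℝ) / (2 ^ n * (C n : ℝ)))
      Filter.atTop (nhds ((10 - 2 * Real.sqrt 10) / 10)) := by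
  have hCcat := C_eq_catalan C hC1 hC
  set A : ℕ → ℝ := fun n => (2:ℝ)^n * (C n : ℝ) with hA
  set T : ℕ → ℝ := fun n => A n - (y n : ℝ) with hT
  have hAcat : ∀ n, 1 ≤ n → A n = 2^n * ((catalan (n-1) : ℕ) : ℝ) := by
    intro n hn
    show (2:ℝ)^n * (C n : ℝ) = _
    rw [hCcat n hn]
    push_cast
    ring
  have hcatpos : ∀ m : ℕ, 0 < catalan m := by
    intro m
    have h1 : 0 < (m+1) * catalan m := by
      rw [succ_mul_catalan_eq_centralBinom]
      exact Nat.centralBinom_pos m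
    exact Nat.pos_of_ne_zero fun h => by simp [h] at h1
  have hA0 : A 0 = 0 := by show (2:ℝ)^0 * (C 0 : ℝ) = 0; rw [hC0]; norm_num
  have hT0 : T 0 = 0 := by show A 0 - (y 0 : ℝ) = 0; rw [hA0, hy0]; norm_num
  have hA1 : A 1 = 2 := by show (2:ℝ)^1 * (C 1 : ℝ) = 2; rw [hC1]; norm_num
  have hT1 : T 1 = 1 := by show A 1 - (y 1 : ℝ) = 1; rw [hA1, hy1]; norm_num
  have hApos : ∀ n, 1 ≤ n → 0 < A n := by
    intro n hn
    rw [hAcat n hn]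
    have := hcatpos (n-1)
    have h2 : (0:ℝ) < ((catalan (n-1) : ℕ) : ℝ) := by exact_mod_cast this
    positivity
  have hArec : ∀ n, 2 ≤ n → A n = ∑ i ∈ Finset.Ico 1 n, A i * A (n-i) := by
    intro n h2
    have hcast : ((C n : ℤ) : ℝ) = ∑ i ∈ Finset.Ico 1 n, ((C i : ℤ) : ℝ) * ((C (n-i) : ℤ) : ℝ) := by
      exact_mod_cast congrArg (fun z : ℤ => (z : ℝ)) (hC n h2)
    show (2:ℝ)^n * (C n : ℝ) = _
    rw [hcast, Finset.mul_sum]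
    apply Finset.sum_congr rfl
    intro i hi
    rw [Finset.mem_Ico] at hi
    show _ = (2:ℝ)^i * (C i : ℝ) * ((2:ℝ)^(n-i) * (C (n-i) : ℝ))
    rw [show (2:ℝ)^n = 2^i * 2^(n-i) from by rw [← pow_add]; congr 1; omega]
    ring
  have hYrec : ∀ n, 2 ≤ n → A n - T n = ∑ i ∈ Finset.Ico 1 n, T i * T (n-i) := by
    intro n h2
    have hcast : ((y n : ℤ) : ℝ) = ∑ i ∈ Finset.Ico 1 n,
        ((2:ℝ)^i * (C i : ℝ) - (y i : ℝ)) * ((2:ℝ)^(n-i) * (C (n-i) : ℝ) - (y (n-i) : ℝ)) := by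
      exact_mod_cast congrArg (fun z : ℤ => (z : ℝ)) (hy n h2)
    show A n - (A n - (y n : ℝ)) = _
    rw [sub_sub_cancel, hcast]
  -- upper bound
  have hAub : ∀ n, 1 ≤ n → A n ≤ 8^n / (4 * n * Real.sqrt n) := by
    intro n hn
    have hnR : (0:ℝ) < (n:ℝ) := by exact_mod_cast hn
    have hn1R : (1:ℝ) ≤ (n:ℝ) := by exact_mod_cast hn
    have hdenpos : (0:ℝ) < 4 * n * Real.sqrt n := by positivity
    rw [le_div_iff₀ hdenpos]
    have e1 : ((n:ℝ)) * ((catalan (n-1) : ℕ) : ℝ) = (Nat.centralBinom (n-1) : ℝ) := by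
      have := succ_mul_catalan_eq_centralBinom (n-1)
      have hcast : (((n-1+1) * catalan (n-1) : ℕ) : ℝ) = ((Nat.centralBinom (n-1) : ℕ) : ℝ) := by
        exact_mod_cast congrArg (fun z : ℕ => (z : ℝ)) this
      push_cast at hcast
      rw [show ((n-1 : ℕ) : ℝ) = (n:ℝ) - 1 from by
        rw [Nat.cast_sub hn]; norm_num] at hcast
      linear_combination hcast
    have hsq : Real.sqrt n ≤ Real.sqrt (3*((n-1:ℕ):ℝ)+1) := by
      apply Real.sqrt_le_sqrt
      rw [show ((n-1 : ℕ) : ℝ) = (n:ℝ) - 1 from by rw [Nat.cast_sub hn]; norm_num]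
      linarith
    have hub := cb_upper (n-1)
    have hcbpos := cb_pos (n-1)
    have hsqnn : 0 ≤ Real.sqrt (n:ℝ) := Real.sqrt_nonneg _
    calc A n * (4 * n * Real.sqrt n)
        = 4 * 2^n * (((n:ℝ)) * ((catalan (n-1):ℕ) : ℝ)) * Real.sqrt n := by
          rw [hAcat n hn]; ring
      _ = 4 * 2^n * (Nat.centralBinom (n-1) : ℝ) * Real.sqrt n := by rw [e1]
      _ ≤ 4 * 2^n * (Nat.centralBinom (n-1) : ℝ) * Real.sqrt (3*((n-1:ℕ):ℝ)+1) := by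
          apply mul_le_mul_of_nonneg_left hsq (by positivity)
      _ = 4 * 2^n * ((Nat.centralBinom (n-1) : ℝ) * Real.sqrt (3*((n-1:ℕ):ℝ)+1)) := by ring
      _ ≤ 4 * 2^n * 4^(n-1) := by
          apply mul_le_mul_of_nonneg_left hub (by positivity)
      _ = 2^n * 4^n := by
          rw [show (4:ℝ)^n = 4^(n-1+1) from by congr 1; omega, pow_succ]
          ring
      _ = 8^n := by rw [show (8:ℝ) = 2*4 from by norm_num, mul_pow]
  -- ratio limit
  have hrat : Tendsto (fun n => A n / A (n+1)) atTop (𝓝 (1/8)) := by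
    have hfr : Tendsto (fun n : ℕ => (1 + 1/(n:ℝ))/(8 - 4*(1/(n:ℝ)))) atTop (𝓝 (1/8)) := by
      have l1 : Tendsto (fun n:ℕ => 1 + 1/(n:ℝ)) atTop (𝓝 1) := by
        have h2 := (tendsto_const_nhds : Tendsto (fun _ : ℕ => (1:ℝ)) atTop (𝓝 1)).add
          tendsto_one_div_atTop_nhds_zero_nat
        simpa using h2
      have l2 : Tendsto (fun n:ℕ => 8 - 4*(1/(n:ℝ))) atTop (𝓝 8) := by
        have h2 := (tendsto_const_nhds : Tendsto (fun _ : ℕ => (8:ℝ)) atTop (𝓝 8)).sub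
          ((tendsto_one_div_atTop_nhds_zero_nat).const_mul (4:ℝ))
        simpa using h2
      have := l1.div l2 (by norm_num)
      exact this
    apply hfr.congr'
    filter_upwards [eventually_ge_atTop 1] with n hn
    have hnR : (0:ℝ) < (n:ℝ) := by exact_mod_cast hn
    have hn1R : (1:ℝ) ≤ (n:ℝ) := by exact_mod_cast hn
    -- cross identity
    have e1 : ((n:ℝ)) * ((catalan (n-1) : ℕ) : ℝ) = (Nat.centralBinom (n-1) : ℝ) := by
      have := succ_mul_catalan_eq_centralBinom (n-1)
      have hcast : (((n-1+1) * catalan (n-1) : ℕ) : ℝ) = ((Nat.centralBinom (n-1) : ℕ) : ℝ) := by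
        exact_mod_cast congrArg (fun z : ℕ => (z : ℝ)) this
      push_cast at hcast
      rw [show ((n-1 : ℕ) : ℝ) = (n:ℝ) - 1 from by rw [Nat.cast_sub hn]; norm_num] at hcast
      linear_combination hcast
    have e2 : ((n:ℝ)+1) * ((catalan n : ℕ) : ℝ) = (Nat.centralBinom n : ℝ) := by
      have := succ_mul_catalan_eq_centralBinom n
      exact_mod_cast congrArg (fun z : ℕ => (z : ℝ)) this
    have e3 : ((n:ℝ)) * (Nat.centralBinom n : ℝ) = 2*(2*(n:ℝ)-1) * (Nat.centralBinom (n-1) : ℝ) := by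
      have := cb_rec (n-1)
      rw [show ((n-1 : ℕ) : ℝ) = (n:ℝ) - 1 from by rw [Nat.cast_sub hn]; norm_num] at this
      rw [show (n-1+1 : ℕ) = n from by omega] at this
      calc ((n:ℝ)) * (Nat.centralBinom n : ℝ)
          = ((n:ℝ) - 1 + 1) * (Nat.centralBinom n : ℝ) := by ring
        _ = 2*(2*((n:ℝ)-1)+1) * (Nat.centralBinom (n-1) : ℝ) := this
        _ = 2*(2*(n:ℝ)-1) * (Nat.centralBinom (n-1) : ℝ) := by ring
    have hcross : A n * (8*(n:ℝ)-4) = ((n:ℝ)+1) * A (n+1) := by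
      apply mul_left_cancel₀ hnR.ne'
      rw [hAcat n hn, hAcat (n+1) (by omega)]
      rw [show (n+1-1 : ℕ) = n from by omega]
      calc (n:ℝ) * (2^n * ((catalan (n-1):ℕ):ℝ) * (8*(n:ℝ)-4))
          = (8*(n:ℝ)-4) * 2^n * ((n:ℝ) * ((catalan (n-1):ℕ):ℝ)) := by ring
        _ = (8*(n:ℝ)-4) * 2^n * (Nat.centralBinom (n-1) : ℝ) := by rw [e1]
        _ = 2^n * 2 * (2*(2*(n:ℝ)-1) * (Nat.centralBinom (n-1) : ℝ)) := by ring
        _ = 2^n * 2 * ((n:ℝ) * (Nat.centralBinom n : ℝ)) := by rw [e3]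
        _ = (n:ℝ) * (((n:ℝ)+1) * (2^(n+1) * ((catalan n:ℕ):ℝ))) := by
            rw [← e2, pow_succ]; ring
    have hAne1 : A (n+1) ≠ 0 := (hApos (n+1) (by omega)).ne'
    have h84 : (8*(n:ℝ)-4) ≠ 0 := ne_of_gt (by linarith)
    have hinv1 : 1/(n:ℝ) ≤ 1 := by
      rw [div_le_one hnR]
      exact_mod_cast hn
    have hden1 : (8 - 4*(1/(n:ℝ))) ≠ 0 := ne_of_gt (by linarith)
    have step1 : (1 + 1/(n:ℝ))/(8 - 4*(1/(n:ℝ))) = ((n:ℝ)+1)/(8*(n:ℝ)-4) := by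
      rw [div_eq_div_iff hden1 h84]
      field_simp
      try ring
    have step2 : ((n:ℝ)+1)/(8*(n:ℝ)-4) = A n / A (n+1) := by
      rw [div_eq_div_iff h84 hAne1]
      linarith [hcross]
    rw [step1, step2]
  have hfin := main A T hA0 hT0 hA1 hT1 hApos hArec hYrec hAub hrat
  apply hfin.congr
  intro n
  show (A n - T n)/A n = (y n : ℝ)/A n
  congr 1
  show A n - (A n - (y n : ℝ)) = _
  rw [sub_sub_cancel]
end
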